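/- arXiv:1310.6713 — 3 statements merged into one kernel-verified Lean document; each statement's English description precedes it below -/
import Mathlib

section
/- For every d ∈ ℕ there exists C > 0 such that if f(x) = w₁(x)e^{w₂(x)} is a probability density on (0,∞), where w₁, w₂ are finite sums of power functions, all powers in w₂ are positive with highest power d, w₁ > 0 on (0,∞), then for all x ∈ (0,∞): |f'(x)/f(x) · x| ≤ C·max{1, x^d}. -/
/-!
Since `x f'/f = x w₁'/w₁ + x w₂'`, it suffices to bound the two terms. The second is a
combination of the powers `x ^ q j` with `0 < q j ≤ d`, each at most `max 1 (x ^ d)`. The first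
is continuous on `(0, ∞)`; after collecting equal exponents of `w₁` it tends to the smallest
exponent at `0` and to the largest at `∞`, so it is bounded.
-/

open Set Filter Topology

section GeneralizedPolynomial

variable {l : Filter ℝ} {s : Finset ℝ} {M : ℝ}

theorem tendsto_sum_mul_rpow_mul_rpow_neg (hM : M ∈ s) (u : ℝ → ℝ)
    (hpos : ∀ᶠ x in l, 0 < x) (hlim : ∀ r ∈ s, r ≠ M → Tendsto (fun x => x ^ (r - M)) l (𝓝 0)) :
    Tendsto (fun x => (∑ r ∈ s, u r * x ^ r) * x ^ (-M)) l (𝓝 (u M)) := by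
  have hterms : Tendsto (fun x => ∑ r ∈ s, u r * x ^ (r - M)) l
      (𝓝 (∑ r ∈ s, if r = M then u r else 0)) := by
    refine tendsto_finsetSum s fun r hr => ?_
    by_cases h : r = M
    · simp [h, tendsto_const_nhds]
    · simpa [h] using (hlim r hr h).const_mul (u r)
  rw [Finset.sum_ite_eq', if_pos hM] at hterms
  refine hterms.congr' ?_
  filter_upwards [hpos] with x hx
  rw [Finset.sum_mul]
  refine Finset.sum_congr rfl fun r _ => ?_
  rw [Real.rpow_sub hx, Real.rpow_neg hx.le]
  ring

theorem tendsto_sum_mul_rpow_div_sum_mul_rpow (hM : M ∈ s) (u v : ℝ → ℝ) (hv : v M ≠ 0)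
    (hpos : ∀ᶠ x in l, 0 < x) (hlim : ∀ r ∈ s, r ≠ M → Tendsto (fun x => x ^ (r - M)) l (𝓝 0)) :
    Tendsto (fun x => (∑ r ∈ s, u r * x ^ r) / ∑ r ∈ s, v r * x ^ r) l (𝓝 (u M / v M)) := by
  refine ((tendsto_sum_mul_rpow_mul_rpow_neg hM u hpos hlim).div
    (tendsto_sum_mul_rpow_mul_rpow_neg hM v hpos hlim) hv).congr' ?_
  filter_upwards [hpos] with x hx
  exact mul_div_mul_right _ _ (Real.rpow_pos_of_pos hx _).ne'

end GeneralizedPolynomial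

theorem exists_abs_le_of_continuousOn_Ioi {g : ℝ → ℝ} (hg : ContinuousOn g (Ioi 0)) {a b : ℝ}
    (h₀ : Tendsto g (𝓝[>] 0) (𝓝 a)) (htop : Tendsto g atTop (𝓝 b)) :
    ∃ C, ∀ x ∈ Ioi (0 : ℝ), |g x| ≤ C := by
  obtain ⟨δ, hδ, hnear⟩ := (nhdsGT_basis (0 : ℝ)).eventually_iff.1 <|
    h₀.abs.eventually (gt_mem_nhds (lt_add_one |a|))
  obtain ⟨X, hfar⟩ := eventually_atTop.1 <| htop.abs.eventually (gt_mem_nhds (lt_add_one |b|))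
  obtain ⟨K, hK⟩ := isCompact_Icc.exists_bound_of_continuousOn
    (hg.mono fun x (hx : x ∈ Icc δ X) => hδ.trans_le hx.1)
  refine ⟨max (max (|a| + 1) (|b| + 1)) K, fun x (hx : 0 < x) => ?_⟩
  rcases lt_or_ge x δ with hxδ | hδx
  · exact (hnear ⟨hx, hxδ⟩).le.trans (by simp)
  rcases le_or_gt x X with hxX | hXx
  · exact (hK x ⟨hδx, hxX⟩).trans (by simp)
  · exact (hfar x hXx.le).le.trans (by simp)

theorem Finsupp.exists_abs_sum_mul_rpow_div_le (c : ℝ →₀ ℝ)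
    (hc : ∀ x ∈ Ioi (0 : ℝ), ∑ r ∈ c.support, c r * x ^ r ≠ 0) :
    ∃ C, ∀ x ∈ Ioi (0 : ℝ),
      |(∑ r ∈ c.support, c r * r * x ^ r) / ∑ r ∈ c.support, c r * x ^ r| ≤ C := by
  have hne : c.support.Nonempty := by
    by_contra h
    exact hc 1 (mem_Ioi.2 one_pos) (by simp [Finset.not_nonempty_iff_eq_empty.1 h])
  have hmem {r} (hr : r ∈ c.support) : c r ≠ 0 := Finsupp.mem_support_iff.1 hr
  refine exists_abs_le_of_continuousOn_Ioi ?_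
    (tendsto_sum_mul_rpow_div_sum_mul_rpow (c.support.min'_mem hne) (fun r => c r * r) c
      (hmem (c.support.min'_mem hne)) self_mem_nhdsWithin fun r hr h => ?_)
    (tendsto_sum_mul_rpow_div_sum_mul_rpow (c.support.max'_mem hne) (fun r => c r * r) c
      (hmem (c.support.max'_mem hne)) (eventually_gt_atTop 0) fun r hr h => ?_)
  · have hcont (e : ℝ) : ContinuousOn (fun x : ℝ => x ^ e) (Ioi 0) :=
      fun x hx => (Real.continuousAt_rpow_const x e (.inl (ne_of_gt hx))).continuousWithinAt
    exact ContinuousOn.div (continuousOn_finsetSum _ fun r _ => continuousOn_const.mul (hcont r))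
      (continuousOn_finsetSum _ fun r _ => continuousOn_const.mul (hcont r)) hc
  · exact (tendsto_nhdsWithin_of_tendsto_nhds tendsto_id).rpow_const_nhds_zero
      (sub_pos.2 (lt_of_le_of_ne (c.support.min'_le r hr) (Ne.symm h)))
  · simpa using tendsto_rpow_neg_atTop
      (sub_pos.2 (lt_of_le_of_ne (c.support.le_max' r hr) h))

theorem exists_abs_sum_mul_rpow_div_le {ι : Type*} [Fintype ι] (a p : ι → ℝ)
    (h : ∀ x ∈ Ioi (0 : ℝ), ∑ i, a i * x ^ p i ≠ 0) :
    ∃ C, ∀ x ∈ Ioi (0 : ℝ), |(∑ i, a i * p i * x ^ p i) / ∑ i, a i * x ^ p i| ≤ C := by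
  set c : ℝ →₀ ℝ := ∑ i, Finsupp.single (p i) (a i)
  have hc (t : ℝ → ℝ) (x : ℝ) :
      ∑ i, a i * t (p i) * x ^ p i = ∑ r ∈ c.support, c r * t r * x ^ r := by
    change _ = c.sum fun r b => b * t r * x ^ r
    rw [← Finsupp.sum_finsetSum_index (by simp) (fun _ _ _ => by ring)]
    simp
  have hc₁ (x : ℝ) : ∑ i, a i * x ^ p i = ∑ r ∈ c.support, c r * x ^ r := by
    simpa using hc 1 x
  have hc₂ (x : ℝ) : ∑ i, a i * p i * x ^ p i = ∑ r ∈ c.support, c r * r * x ^ r :=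
    hc (fun r => r) x
  simp only [hc₁, hc₂] at h ⊢
  exact c.exists_abs_sum_mul_rpow_div_le h

theorem hasDerivAt_sum_mul_rpow {ι : Type*} (s : Finset ι) (a p : ι → ℝ) {x : ℝ} (hx : 0 < x) :
    HasDerivAt (fun y => ∑ i ∈ s, a i * y ^ p i) ((∑ i ∈ s, a i * p i * x ^ p i) / x) x := by
  refine (HasDerivAt.fun_sum fun i _ =>
    (Real.hasDerivAt_rpow_const (p := p i) (.inl hx.ne')).const_mul (a i)).congr_deriv ?_
  rw [Finset.sum_div]
  refine Finset.sum_congr rfl fun i _ => ?_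
  rw [Real.rpow_sub hx, Real.rpow_one]
  ring

theorem rpow_le_max_one_pow {x e : ℝ} (hx : 0 < x) {d : ℕ} (he : 0 ≤ e) (hed : e ≤ d) :
    x ^ e ≤ max 1 (x ^ d) := by
  rcases le_total x 1 with h | h
  · exact le_max_of_le_left (Real.rpow_le_one hx.le h he)
  · exact le_max_of_le_right (Real.rpow_natCast x d ▸ Real.rpow_le_rpow_of_exponent_le h hed)

theorem abs_sum_mul_rpow_le_mul_max {ι : Type*} (s : Finset ι) (c q : ι → ℝ) {d : ℕ}
    (hq : ∀ i ∈ s, 0 ≤ q i ∧ q i ≤ d) {x : ℝ} (hx : 0 < x) :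
    |∑ i ∈ s, c i * x ^ q i| ≤ (∑ i ∈ s, |c i|) * max 1 (x ^ d) := by
  rw [Finset.sum_mul]
  refine (Finset.abs_sum_le_sum_abs _ _).trans (Finset.sum_le_sum fun i hi => ?_)
  rw [abs_mul, abs_of_pos (Real.rpow_pos_of_pos hx _)]
  exact mul_le_mul_of_nonneg_left (rpow_le_max_one_pow hx (hq i hi).1 (hq i hi).2) (abs_nonneg _)

theorem stmt_7_general (d : ℕ) (m₁ m₂ : ℕ)
    (a : Fin m₁ → ℝ) (p : Fin m₁ → ℝ) (b : Fin m₂ → ℝ) (q : Fin m₂ → ℝ)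
    (w₁ w₂ f : ℝ → ℝ)
    (hw₁ : ∀ x, w₁ x = ∑ i, a i * x ^ (p i))
    (hw₂ : ∀ x, w₂ x = ∑ j, b j * x ^ (q j))
    (hq : ∀ j, 0 < q j)
    (hqd : ∀ j, q j ≤ (d : ℝ))
    (hw₁pos : ∀ x ∈ Ioi (0:ℝ), 0 < w₁ x)
    (hf : ∀ x, f x = w₁ x * Real.exp (w₂ x)) :
    ∃ C : ℝ, 0 < C ∧ ∀ x ∈ Ioi (0:ℝ),
      |deriv f x / f x * x| ≤ C * max 1 (x ^ d) := by
  obtain ⟨C, hC⟩ := exists_abs_sum_mul_rpow_div_le a p fun x hx => hw₁ x ▸ (hw₁pos x hx).ne'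
  refine ⟨max C 1 + ∑ j, |b j * q j|, by positivity, fun x (hx : 0 < x) => ?_⟩
  have hfun : f = fun y => (∑ i, a i * y ^ p i) * Real.exp (∑ j, b j * y ^ q j) :=
    funext fun y => by rw [hf, hw₁, hw₂]
  have hlog : deriv f x / f x * x =
      (∑ i, a i * p i * x ^ p i) / (∑ i, a i * x ^ p i) + ∑ j, b j * q j * x ^ q j := by
    have hw₁x := hw₁ x ▸ (hw₁pos x hx).ne'
    rw [hfun, ((hasDerivAt_sum_mul_rpow _ a p hx).fun_mul
      (hasDerivAt_sum_mul_rpow _ b q hx).exp).deriv]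
    field_simp
  have hbound₁ := (hC x hx).trans ((le_max_left C 1).trans
    (le_mul_of_one_le_right (by positivity) (le_max_left 1 (x ^ d))))
  have hbound₂ := abs_sum_mul_rpow_le_mul_max Finset.univ (fun j => b j * q j) q
    (fun j _ => ⟨(hq j).le, hqd j⟩) hx
  calc |deriv f x / f x * x|
      ≤ |(∑ i, a i * p i * x ^ p i) / (∑ i, a i * x ^ p i)| + |∑ j, b j * q j * x ^ q j| :=
        hlog ▸ abs_add_le _ _
    _ ≤ (max C 1 + ∑ j, |b j * q j|) * max 1 (x ^ d) := by
      rw [add_mul]; exact add_le_add hbound₁ hbound₂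

/-- If `f(x) = w₁(x) e^{w₂(x)}` is a probability density on `(0,∞)` where
`w₁, w₂` are finite sums of power functions, `w₁ > 0` on `(0,∞)` with all powers `> -1`,
and all powers of `w₂` are positive with highest power `d`, then there is `C > 0` with
`|f'(x)/f(x) · x| ≤ C · max{1, x^d}` for all `x > 0`. -/
theorem stmt_7 (d : ℕ) (m₁ m₂ : ℕ)
    (a : Fin m₁ → ℝ) (p : Fin m₁ → ℝ) (b : Fin m₂ → ℝ) (q : Fin m₂ → ℝ)
    (w₁ w₂ f : ℝ → ℝ)
    (hw₁ : ∀ x, w₁ x = ∑ i, a i * x ^ (p i))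
    (hw₂ : ∀ x, w₂ x = ∑ j, b j * x ^ (q j))
    (hp : ∀ i, -1 < p i)
    (hq : ∀ j, 0 < q j)
    (hqd : ∀ j, q j ≤ (d : ℝ))
    (hd : ∃ j, q j = (d : ℝ))
    (hw₁pos : ∀ x ∈ Ioi (0:ℝ), 0 < w₁ x)
    (hf : ∀ x, f x = w₁ x * Real.exp (w₂ x))
    (hf_density : ∫ x in Ioi (0:ℝ), f x = 1) :
    ∃ C : ℝ, 0 < C ∧ ∀ x ∈ Ioi (0:ℝ),
      |deriv f x / f x * x| ≤ C * max 1 (x ^ d) :=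
  stmt_7_general d m₁ m₂ a p b q w₁ w₂ f hw₁ hw₂ hq hqd hw₁pos hf
end

section
/- Define x_d := 1 + 1/2 + ... + 1/d for d ∈ ℕ, and let g : (1,∞) → ℝ be given by g(x) = (x - x_d)/(d+1) for x_d < x ≤ x_{d+1}. Then ∫₁^∞ x² g(x) dx < ∞ while ∫₁^∞ (g'(x)/g(x) · x)² g(x) dx = ∞ (where g' is taken on the interior of each interval (x_d, x_{d+1})). -/
/-!
On the `d`-th piece `g` is affine of slope `1/(d+1)` over an interval of length `1/(d+1)`,
so `g ≤ (d+1)⁻²` there; since `x ≤ H_{d+1} ≤ 1 + log (d+1)`, this gives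
`x² g(x) ≤ x² e^{2-2x}`, which is integrable on `(1, ∞)`. On the other hand
`(g'/g · x)² g = x² / ((d+1)(x - H_d))` has a non-integrable singularity at the left end of
every piece, already at `x = 1`.
-/

open MeasureTheory Set Filter Real

theorem harmonic_eq_sum_one_div (d : ℕ) :
    (harmonic d : ℝ) = ∑ i ∈ Finset.range d, (1 : ℝ) / (i + 1) := by
  simp [harmonic]

theorem tendsto_harmonic_atTop : Tendsto (fun d => (harmonic d : ℝ)) atTop atTop := by
  simpa only [harmonic_eq_sum_one_div] using Real.tendsto_sum_range_one_div_nat_succ_atTop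

theorem exists_mem_Ioc_of_tendsto_atTop {X : Type*} [LinearOrder X] {a : ℕ → X}
    (ha : Tendsto a atTop atTop) {x : X} (hx : a 0 < x) : ∃ i, x ∈ Ioc (a i) (a (i + 1)) := by
  obtain ⟨N, hN⟩ := (ha.eventually_ge_atTop x).exists
  obtain ⟨i, -, hi⟩ := mem_iUnion₂.1 (Ioc_subset_biUnion_Ioc N a ⟨hx, hN⟩)
  exact ⟨i, hi⟩

theorem exists_harmonic_mem_Ioc {x : ℝ} (hx : 1 < x) :
    ∃ d, 1 ≤ d ∧ x ∈ Ioc (harmonic d : ℝ) (harmonic (d + 1)) := by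
  obtain ⟨i, hi⟩ := exists_mem_Ioc_of_tendsto_atTop (a := fun i => (harmonic (i + 1) : ℝ))
    ((tendsto_add_atTop_iff_nat 1).2 tendsto_harmonic_atTop) (by simpa using hx)
  exact ⟨i + 1, by omega, hi⟩

theorem sub_harmonic_div_le_exp {d : ℕ} {x : ℝ}
    (hx : x ∈ Ioc (harmonic d : ℝ) (harmonic (d + 1))) :
    (x - harmonic d) / (d + 1) ≤ exp (2 - 2 * x) := by
  have hd : (0 : ℝ) < d + 1 := by positivity
  have hlen : x - harmonic d ≤ 1 / (d + 1) := by
    have := hx.2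
    simp only [harmonic_succ] at this
    push_cast at this
    rw [one_div]
    linarith
  have hlog : x - 1 ≤ log (d + 1) := by
    have := harmonic_le_one_add_log (d + 1)
    push_cast at this
    linarith [hx.2]
  calc (x - harmonic d) / (d + 1) ≤ 1 / (d + 1) / (d + 1) := by gcongr
    _ = exp (-2 * log (d + 1)) := by
      rw [show -2 * log (d + 1) = -(log (d + 1) + log (d + 1)) by ring, exp_neg, exp_add,
        exp_log hd]
      field_simp
    _ ≤ exp (2 - 2 * x) := by gcongr; linarith

theorem integrableOn_sq_mul_exp_two_sub_two_mul :
    IntegrableOn (fun x : ℝ => x ^ 2 * exp (2 - 2 * x)) (Ioi 1) := by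
  have h := ((integrableOn_rpow_mul_exp_neg_mul_rpow (s := 2) (p := 1) (b := 2)
    (by norm_num) one_pos two_pos).mono_set (Ioi_subset_Ioi zero_le_one)).const_mul (exp 2)
  refine IntegrableOn.congr_fun h (fun x _ => ?_) measurableSet_Ioi
  simp only [rpow_one, rpow_two, sub_eq_add_neg, exp_add, neg_mul]
  ring

theorem lintegral_Ioo_ofReal_div_sub_eq_top {a b c : ℝ} (hab : a < b) (hc : 0 < c) :
    ∫⁻ x in Ioo a b, ENNReal.ofReal (c / (x - a)) = ⊤ := by
  by_contra h
  have hnonneg : 0 ≤ᵐ[volume.restrict (Ioo a b)] fun x => c / (x - a) :=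
    (ae_restrict_mem measurableSet_Ioo).mono fun x hx => div_nonneg hc.le (sub_nonneg.2 hx.1.le)
  have hint : IntegrableOn (fun x => c / (x - a)) (Ioo a b) :=
    (lintegral_ofReal_ne_top_iff_integrable
      (by fun_prop : Measurable fun x => c / (x - a)).aestronglyMeasurable hnonneg).1 h
  have : IntervalIntegrable (fun x => (x - a)⁻¹) volume a b := by
    rw [intervalIntegrable_iff_integrableOn_Ioo_of_le hab.le]
    refine IntegrableOn.congr_fun (hint.const_mul c⁻¹) (fun x _ => ?_) measurableSet_Ioo
    field_simp
  exact (intervalIntegrable_sub_inv_iff.1 this).elim hab.ne (· left_mem_uIcc)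

theorem deriv_div_mul_sq_mul_eq_of_eqOn {g : ℝ → ℝ} {s : Set ℝ} {a c x : ℝ}
    (hs : IsOpen s) (hg : EqOn g (fun y => (y - a) / c) s) (hx : x ∈ s) (hxa : x ≠ a)
    (hc : c ≠ 0) :
    (deriv g x / g x * x) ^ 2 * g x = x ^ 2 / (c * (x - a)) := by
  have hder : deriv g x = 1 / c := by
    rw [(eventuallyEq_of_mem (hs.mem_nhds hx) hg).deriv_eq]
    exact (((hasDerivAt_id x).sub_const a).div_const c).deriv
  rw [hder, hg hx]
  have : x - a ≠ 0 := sub_ne_zero.2 hxa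
  field_simp

/-- With `x_d` the `d`-th harmonic number and `g(x) = (x - x_d)/(d+1)` on
`(x_d, x_{d+1}]`, the integral `∫₁^∞ x² g(x) dx` is finite while
`∫₁^∞ (g'(x)/g(x)·x)² g(x) dx` is infinite. -/
theorem stmt_8 (H : ℕ → ℝ)
    (hH : ∀ d : ℕ, H d = ∑ i ∈ Finset.range d, (1 : ℝ) / (i + 1))
    (g : ℝ → ℝ)
    (hg : ∀ d : ℕ, 1 ≤ d → ∀ x ∈ Ioc (H d) (H (d + 1)), g x = (x - H d) / (d + 1)) :
    (∫⁻ x in Ioi (1:ℝ), ENNReal.ofReal (x ^ 2 * g x)) < ⊤ ∧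
    (∫⁻ x in Ioi (1:ℝ), ENNReal.ofReal ((deriv g x / g x * x) ^ 2 * g x)) = ⊤ := by
  obtain rfl : H = fun d => (harmonic d : ℝ) :=
    funext fun d => (hH d).trans (harmonic_eq_sum_one_div d).symm
  beta_reduce at hg
  constructor
  · refine lt_of_le_of_lt
      (setLIntegral_mono (by fun_prop) fun x hx => ENNReal.ofReal_le_ofReal ?_)
      integrableOn_sq_mul_exp_two_sub_two_mul.lintegral_lt_top
    obtain ⟨d, hd, hxd⟩ := exists_harmonic_mem_Ioc hx
    rw [hg d hd x hxd]
    exact mul_le_mul_of_nonneg_left (sub_harmonic_div_le_exp hxd) (sq_nonneg x)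
  · have h₁ : (harmonic 1 : ℝ) = 1 := by norm_num [harmonic]
    have h₂ : (harmonic 2 : ℝ) = 3 / 2 := by norm_num [harmonic]
    have hg₁ : EqOn g (fun y => (y - 1) / 2) (Ioo 1 (3 / 2)) := fun y hy => by
      rw [hg 1 le_rfl y (by rw [h₁, h₂]; exact Ioo_subset_Ioc_self hy), h₁]
      norm_num
    refine eq_top_iff.2 (le_of_eq_of_le (lintegral_Ioo_ofReal_div_sub_eq_top
      (by norm_num : (1 : ℝ) < 3 / 2) (half_pos one_pos)).symm ?_)
    calc ∫⁻ x in Ioo 1 (3 / 2), ENNReal.ofReal (1 / 2 / (x - 1))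
        ≤ ∫⁻ x in Ioo 1 (3 / 2), ENNReal.ofReal ((deriv g x / g x * x) ^ 2 * g x) := by
          refine setLIntegral_mono' measurableSet_Ioo fun x hx => ENNReal.ofReal_le_ofReal ?_
          rw [deriv_div_mul_sq_mul_eq_of_eqOn isOpen_Ioo hg₁ hx hx.1.ne' two_ne_zero, div_div]
          have : 0 < x - 1 := sub_pos.2 hx.1
          gcongr
          exact one_le_pow₀ hx.1.le
      _ ≤ _ := lintegral_mono_set Ioo_subset_Ioi_self
end

section
/- Let Λ : E → E be defined on bounded measurable functions φ : S × [0,∞) → (0,∞) (with S countable, prior weights π_l > 0 summing to 1, and the normalizing sum Σ_k π_k φ(k,t) finite and bounded away from 0 uniformly) by Λ(φ)(l,t) = π_l φ(l,t)/Σ_{k∈S} π_k φ(k,t). Then Λ is continuous with respect to the uniform-on-compacts metric e_∞(ν,κ) = Σ_{T=1}^∞ 2^{-T} (sup_{l∈S, t≤T}|ν(l,t) - κ(l,t)| ∧ 1). -/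
open Set

/-- The truncated uniform distance `e_T` on functions `S × [0,∞) → ℝ`. -/
noncomputable def eT {S : Type*} (T : ℕ) (ν κ : S → ℝ → ℝ) : ℝ :=
  ⨆ l : S, ⨆ t : Icc (0:ℝ) (T:ℝ), min |ν l t - κ l t| 1

/-- The metric `e_∞(ν,κ) = Σ_T 2^{-T} (sup_{l, t≤T} |ν - κ| ∧ 1)`. -/
noncomputable def eInf {S : Type*} (ν κ : S → ℝ → ℝ) : ℝ :=
  ∑' T : ℕ, eT (T + 1) ν κ / 2 ^ (T + 1)

lemma eT_nonneg {S : Type*} (T : ℕ) (ν κ : S → ℝ → ℝ) : 0 ≤ eT T ν κ :=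
  Real.iSup_nonneg fun _ => Real.iSup_nonneg fun _ => le_min (abs_nonneg _) zero_le_one

lemma eT_le_one {S : Type*} (T : ℕ) (ν κ : S → ℝ → ℝ) : eT T ν κ ≤ 1 :=
  Real.iSup_le (fun _ => Real.iSup_le (fun _ => min_le_right _ _) zero_le_one) zero_le_one

lemma min_le_eT {S : Type*} (T : ℕ) (ν κ : S → ℝ → ℝ) (l : S) (t : Icc (0:ℝ) (T:ℝ)) :
    min |ν l t - κ l t| 1 ≤ eT T ν κ := by
  have h1 : min |ν l t - κ l t| 1 ≤ ⨆ s : Icc (0:ℝ) (T:ℝ), min |ν l s - κ l s| 1 :=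
    le_ciSup (f := fun s : Icc (0:ℝ) (T:ℝ) => min |ν l s - κ l s| 1)
      ⟨1, by rintro x ⟨s, rfl⟩; exact min_le_right _ _⟩ t
  refine h1.trans (le_ciSup (f := fun l : S => ⨆ s : Icc (0:ℝ) (T:ℝ), min |ν l s - κ l s| 1)
    ⟨1, ?_⟩ l)
  rintro x ⟨m, rfl⟩
  exact Real.iSup_le (fun _ => min_le_right _ _) zero_le_one

lemma summable_half_pow : Summable (fun T : ℕ => ((1:ℝ)/2) ^ (T + 1)) :=
  (summable_nat_add_iff 1).mpr summable_geometric_two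

lemma eInf_summable {S : Type*} (ν κ : S → ℝ → ℝ) :
    Summable (fun T : ℕ => eT (T + 1) ν κ / 2 ^ (T + 1)) := by
  refine Summable.of_nonneg_of_le
    (fun T => div_nonneg (eT_nonneg _ _ _) (by positivity))
    (fun T => ?_) summable_half_pow
  rw [div_pow, one_pow]
  exact div_le_div_of_nonneg_right (eT_le_one _ _ _) (by positivity) |>.trans_eq rfl

lemma term_le_eInf {S : Type*} (T : ℕ) (ν κ : S → ℝ → ℝ) :
    eT (T + 1) ν κ / 2 ^ (T + 1) ≤ eInf ν κ :=
  Summable.le_tsum (eInf_summable ν κ) T fun j _ => div_nonneg (eT_nonneg _ _ _) (by positivity)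

/-- Pointwise bound on the difference of posteriors. -/
lemma key_bound {S : Type*} (π : S → ℝ) (hπpos : ∀ l, 0 < π l) (hπsum : HasSum π 1)
    (φ ψ : S → ℝ → ℝ) (t : ℝ)
    (hφpos : ∀ k, 0 < φ k t) (hψpos : ∀ k, 0 < ψ k t)
    (hφsum : Summable (fun k => π k * φ k t)) (hψsum : Summable (fun k => π k * ψ k t))
    (c : ℝ) (hc : 0 < c) (hcφ : c ≤ ∑' k, π k * φ k t)
    (d : ℝ) (hd : 0 ≤ d) (hbd : ∀ k, |φ k t - ψ k t| ≤ d) (l : S) :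
    |π l * φ l t / (∑' k, π k * φ k t) - π l * ψ l t / (∑' k, π k * ψ k t)| ≤ 2 * d / c := by
  set Sφ := ∑' k, π k * φ k t with hSφdef
  set Sψ := ∑' k, π k * ψ k t with hSψdef
  have hπψnn : ∀ k, 0 ≤ π k * ψ k t := fun k => (mul_pos (hπpos k) (hψpos k)).le
  have hSφ : 0 < Sφ := hc.trans_le hcφ
  have hSψ : 0 < Sψ :=
    (mul_pos (hπpos l) (hψpos l)).trans_le (Summable.le_tsum hψsum l fun j _ => hπψnn j)
  have hπl1 : π l ≤ 1 := le_hasSum hπsum l fun j _ => (hπpos j).le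
  -- |Sψ - Sφ| ≤ d
  have hsumd : Summable (fun k => π k * d) := hπsum.summable.mul_right d
  have habs_sum : Summable (fun k => π k * |ψ k t - φ k t|) := by
    refine Summable.of_nonneg_of_le (fun k => mul_nonneg (hπpos k).le (abs_nonneg _))
      (fun k => ?_) hsumd
    exact mul_le_mul_of_nonneg_left (by rw [abs_sub_comm]; exact hbd k) (hπpos k).le
  have hdiff : Sψ - Sφ = ∑' k, (π k * ψ k t - π k * φ k t) := (Summable.tsum_sub hψsum hφsum).symm
  have hSdiff : |Sψ - Sφ| ≤ d := by
    rw [hdiff]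
    have h1 : |∑' k, (π k * ψ k t - π k * φ k t)| ≤ ∑' k, |π k * ψ k t - π k * φ k t| := by
      have : Summable (fun k => |π k * ψ k t - π k * φ k t|) := by
        simpa [← mul_sub, abs_mul, abs_of_pos (hπpos _)] using habs_sum
      simpa using norm_tsum_le_tsum_norm (f := fun k => π k * ψ k t - π k * φ k t) this
    refine h1.trans ?_
    have h2 : ∑' k, |π k * ψ k t - π k * φ k t| = ∑' k, π k * |ψ k t - φ k t| := by
      congr 1; funext k; rw [← mul_sub, abs_mul, abs_of_pos (hπpos k)]
    rw [h2]
    calc ∑' k, π k * |ψ k t - φ k t| ≤ ∑' k, π k * d := by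
          refine Summable.tsum_le_tsum (fun k => ?_) habs_sum hsumd
          exact mul_le_mul_of_nonneg_left (by rw [abs_sub_comm]; exact hbd k) (hπpos k).le
      _ = (∑' k, π k) * d := tsum_mul_right
      _ = d := by rw [hπsum.tsum_eq, one_mul]
  have hπψS : π l * ψ l t ≤ Sψ := Summable.le_tsum hψsum l fun j _ => hπψnn j
  have hdecomp : π l * φ l t / Sφ - π l * ψ l t / Sψ
      = π l * (φ l t - ψ l t) / Sφ + (π l * ψ l t) * (Sψ - Sφ) / (Sφ * Sψ) := by
    field_simp
    ring
  rw [hdecomp]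
  have hA : |π l * (φ l t - ψ l t) / Sφ| ≤ d / c := by
    rw [abs_div, abs_of_pos hSφ, abs_mul, abs_of_pos (hπpos l)]
    have h1 : π l * |φ l t - ψ l t| ≤ d := by
      calc π l * |φ l t - ψ l t| ≤ 1 * d :=
            mul_le_mul hπl1 (hbd l) (abs_nonneg _) zero_le_one
        _ = d := one_mul d
    calc π l * |φ l t - ψ l t| / Sφ ≤ d / Sφ := by gcongr
      _ ≤ d / c := by gcongr
  have hB : |(π l * ψ l t) * (Sψ - Sφ) / (Sφ * Sψ)| ≤ d / c := by
    rw [abs_div, abs_of_pos (mul_pos hSφ hSψ), abs_mul,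
      abs_of_nonneg (hπψnn l)]
    calc (π l * ψ l t) * |Sψ - Sφ| / (Sφ * Sψ) ≤ Sψ * d / (Sφ * Sψ) := by
          gcongr
      _ = d / Sφ := by
          rw [mul_comm Sφ Sψ, mul_div_mul_left _ _ hSψ.ne']
      _ ≤ d / c := by gcongr
  calc |π l * (φ l t - ψ l t) / Sφ + (π l * ψ l t) * (Sψ - Sφ) / (Sφ * Sψ)|
      ≤ |π l * (φ l t - ψ l t) / Sφ| + |(π l * ψ l t) * (Sψ - Sφ) / (Sφ * Sψ)| := abs_add_le _ _
    _ ≤ d / c + d / c := add_le_add hA hB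
    _ = 2 * d / c := by ring

set_option maxHeartbeats 1000000 in
/-- The Bayes map `Λ(φ)(l,t) = π_l φ(l,t) / Σ_k π_k φ(k,t)` is continuous
w.r.t. the uniform-on-compacts metric `e_∞`, on the set of bounded positive functions
whose normalizing sums are summable and uniformly bounded away from `0`. -/
theorem stmt_17 {S : Type*} [Countable S] (π : S → ℝ)
    (hπpos : ∀ l, 0 < π l) (hπsum : HasSum π 1)
    (A : Set (S → ℝ → ℝ))
    (hA : A = {φ | (∀ l, ∀ t, 0 ≤ t → 0 < φ l t) ∧
      (∃ M : ℝ, ∀ l, ∀ t, 0 ≤ t → φ l t ≤ M) ∧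
      (∀ t, 0 ≤ t → Summable (fun k => π k * φ k t)) ∧
      (∃ c > 0, ∀ t, 0 ≤ t → c ≤ ∑' k, π k * φ k t)})
    (Λ : (S → ℝ → ℝ) → (S → ℝ → ℝ))
    (hΛ : ∀ φ l t, Λ φ l t = π l * φ l t / ∑' k, π k * φ k t) :
    ∀ φ ∈ A, ∀ ε > 0, ∃ δ > 0, ∀ ψ ∈ A,
      eInf φ ψ < δ → eInf (Λ φ) (Λ ψ) < ε := by
  intro φ hφA ε hε
  subst hA
  obtain ⟨hφpos, -, hφsum, c, hc, hcφ⟩ := hφA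
  obtain ⟨K, hK⟩ := exists_pow_lt_of_lt_one (show (0:ℝ) < ε/4 by linarith)
    (by norm_num : (1/2:ℝ) < 1)
  set N := K + 1 with hNdef
  have hNpos : 0 < N := Nat.succ_pos K
  have hNε : ((1:ℝ)/2) ^ N ≤ ε / 4 :=
    (pow_le_pow_of_le_one (by norm_num) (by norm_num) (Nat.le_succ K)).trans hK.le
  set δ : ℝ := min (((1:ℝ)/2) ^ N) (c * ε / (4 * N)) with hδdef
  have hδpos : 0 < δ := lt_min (by positivity) (by positivity)
  refine ⟨δ, hδpos, ?_⟩
  intro ψ hψA hdist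
  obtain ⟨hψpos, -, hψsum, -⟩ := hψA
  have hterm : ∀ T : ℕ, T < N → eT (T+1) (Λ φ) (Λ ψ) / 2 ^ (T+1) ≤ ε / (2 * N) := by
    intro T hT
    have hTd : eT (T+1) φ ψ < 2 ^ (T+1) * δ := by
      have h := (term_le_eInf T φ ψ).trans_lt hdist
      rw [div_lt_iff₀ (by positivity)] at h
      calc eT (T+1) φ ψ < δ * 2 ^ (T+1) := h
        _ = 2 ^ (T+1) * δ := mul_comm _ _
    have h2N : (2:ℝ) ^ (T+1) * δ ≤ 1 := by
      have hδle : δ ≤ ((1:ℝ)/2) ^ N := min_le_left _ _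
      have hpow : (2:ℝ) ^ (T+1) ≤ 2 ^ N := pow_le_pow_right₀ one_le_two hT
      calc (2:ℝ)^(T+1) * δ ≤ 2^N * ((1/2)^N) :=
            mul_le_mul hpow hδle hδpos.le (by positivity)
        _ = 1 := by rw [div_pow, one_pow, mul_one_div, div_self (by positivity)]
    have hlt1 : eT (T+1) φ ψ < 1 := hTd.trans_le h2N
    have habs : ∀ (k : S) (t : Icc (0:ℝ) ((T+1 : ℕ):ℝ)),
        |φ k t - ψ k t| ≤ eT (T+1) φ ψ := by
      intro k t
      have hm := min_le_eT (T+1) φ ψ k t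
      rcases le_or_gt |φ k t - ψ k t| 1 with h | h
      · rwa [min_eq_left h] at hm
      · rw [min_eq_right h.le] at hm
        exact absurd (hm.trans_lt hlt1) (lt_irrefl 1)
    have hΛbd : eT (T+1) (Λ φ) (Λ ψ) ≤ 2 * eT (T+1) φ ψ / c := by
      have hdnn : 0 ≤ eT (T+1) φ ψ := eT_nonneg _ _ _
      have hnn : 0 ≤ 2 * eT (T+1) φ ψ / c := by positivity
      refine Real.iSup_le (fun l => Real.iSup_le (fun t => ?_) hnn) hnn
      have ht0 : (0:ℝ) ≤ t := t.2.1
      calc min |Λ φ l t - Λ ψ l t| 1 ≤ |Λ φ l t - Λ ψ l t| := min_le_left _ _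
        _ ≤ 2 * eT (T+1) φ ψ / c := by
            rw [hΛ, hΛ]
            exact key_bound π hπpos hπsum φ ψ t (fun k => hφpos k t ht0)
              (fun k => hψpos k t ht0) (hφsum t ht0) (hψsum t ht0) c hc (hcφ t ht0)
              _ hdnn (fun k => habs k t) l
    calc eT (T+1) (Λ φ) (Λ ψ) / 2 ^ (T+1)
        ≤ (2 * eT (T+1) φ ψ / c) / 2 ^ (T+1) := by gcongr
      _ ≤ (2 * (2^(T+1) * δ) / c) / 2^(T+1) := by gcongr
      _ = 2 * δ / c := by field_simp
      _ ≤ 2 * (c * ε / (4 * N)) / c := by gcongr; exact min_le_right _ _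
      _ = ε / (2 * N) := by field_simp; ring
  have hsum := eInf_summable (Λ φ) (Λ ψ)
  have hsplit : eInf (Λ φ) (Λ ψ) =
      (∑ T ∈ Finset.range N, eT (T+1) (Λ φ) (Λ ψ) / 2 ^ (T+1)) +
      ∑' n : ℕ, eT (n+N+1) (Λ φ) (Λ ψ) / 2 ^ (n+N+1) := by
    rw [eInf]
    exact (Summable.sum_add_tsum_nat_add N hsum).symm
  have hfront : (∑ T ∈ Finset.range N, eT (T+1) (Λ φ) (Λ ψ) / 2 ^ (T+1)) ≤ ε / 2 := by
    calc (∑ T ∈ Finset.range N, eT (T+1) (Λ φ) (Λ ψ) / 2 ^ (T+1))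
        ≤ ∑ _T ∈ Finset.range N, ε / (2 * N) :=
          Finset.sum_le_sum fun i hi => hterm i (Finset.mem_range.mp hi)
      _ = N * (ε / (2 * N)) := by rw [Finset.sum_const, Finset.card_range, nsmul_eq_mul]
      _ = ε / 2 := by
          field_simp
  have htail : (∑' n : ℕ, eT (n+N+1) (Λ φ) (Λ ψ) / 2 ^ (n+N+1)) ≤ ((1:ℝ)/2) ^ N := by
    have h1 : (∑' n : ℕ, eT (n+N+1) (Λ φ) (Λ ψ) / 2 ^ (n+N+1))
        ≤ ∑' n : ℕ, ((1:ℝ)/2) ^ (n+(N+1)) := by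
      refine Summable.tsum_le_tsum (fun n => ?_) ((summable_nat_add_iff N).mpr hsum)
        ((summable_nat_add_iff (N+1)).mpr summable_geometric_two)
      rw [div_pow, one_pow]
      have : n + (N+1) = n + N + 1 := by ring
      rw [this]
      exact div_le_div_of_nonneg_right (eT_le_one _ _ _) (by positivity) |>.trans_eq rfl
    refine h1.trans_eq ?_
    calc ∑' n : ℕ, ((1:ℝ)/2) ^ (n+(N+1))
        = ∑' n : ℕ, ((1:ℝ)/2) ^ n * (1/2) ^ (N+1) := by
          simp [pow_add]
      _ = (∑' n : ℕ, ((1:ℝ)/2) ^ n) * (1/2) ^ (N+1) := tsum_mul_right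
      _ = 2 * (1/2) ^ (N+1) := by rw [tsum_geometric_two]
      _ = (1/2) ^ N := by rw [pow_succ]; ring
  have : eInf (Λ φ) (Λ ψ) ≤ ε / 2 + ε / 4 := by
    rw [hsplit]; exact add_le_add hfront (htail.trans hNε)
  linarith
end
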